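/- Let X be a finite set and let A be an abelian 2-orbit-closed subgroup of Sym(X). Then for every orbit O of A: O is isolated if and only if the factor group A_O/A_O^* is an elementary abelian 2-group (equivalently, the restriction to O of a² lies in A_O^* for every a ∈ A). -/

import Mathlib

/-- The orbit of a point `x` under a set `G` of permutations of `X`. -/
def orbitOf {X : Type*} (G : Set (Equiv.Perm X)) (x : X) : Set X :=
  {y | ∃ a ∈ G, a x = y}

/-- A permutation `σ` is 2-orbit-compatible with `G` if for every pair of orbits
`O` and `Q` of `G` there is an element of `G` agreeing with `σ` on `O ∪ Q`. -/
def TwoOrbitCompatible {X : Type*} (G : Set (Equiv.Perm X)) (σ : Equiv.Perm X) : Prop :=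
  ∀ x y : X, ∃ a ∈ G, ∀ z ∈ orbitOf G x ∪ orbitOf G y, σ z = a z

/-- A subgroup `A ≤ Sym(X)` is 2-orbit-closed if every permutation that is
2-orbit-compatible with `A` belongs to `A`. -/
def TwoOrbitClosed {X : Type*} (A : Subgroup (Equiv.Perm X)) : Prop :=
  ∀ σ : Equiv.Perm X, TwoOrbitCompatible (A : Set (Equiv.Perm X)) σ → σ ∈ A

/-- The factor group `A_O / A_O^*` is an elementary abelian 2-group: for every `a ∈ A`,
the restriction of `a²` to `O` is the restriction of some element of `A` that fixes
every point outside `O`. -/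
def FactorIsElem2 {X : Type*} (A : Subgroup (Equiv.Perm X)) (O : Set X) : Prop :=
  ∀ a ∈ A, ∃ b ∈ A, (∀ z ∈ O, b z = a (a z)) ∧ ∀ z ∉ O, b z = z

/-- An orbit `O` is isolated with respect to `G` if for every orbit `Q ≠ O` the factor
group `G_O / G_O^Q` is an elementary abelian 2-group, i.e. `O` is adjacent to no other
orbit: for every `a ∈ G`, the restriction of `a²` to `O` is the restriction of some
element of `G` fixing `Q` pointwise. -/
def IsolatedWrt {X : Type*} (G : Set (Equiv.Perm X)) (O : Set X) : Prop :=
  ∀ y : X, orbitOf G y ≠ O →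
    ∀ a ∈ G, ∃ b ∈ G, (∀ z ∈ O, b z = a (a z)) ∧ ∀ z ∈ orbitOf G y, b z = z

/-!
If `A_O / A_O^*` has exponent 2, an element of `A` that is `a²` on `O` and trivial off `O`
fixes every other orbit pointwise, so `O` is isolated. Conversely, if `O` is isolated, the
permutation that is `a²` on `O` and the identity elsewhere is 2-orbit-compatible with `A`:
on `O ∪ Q` it agrees with `a²` (if `Q = O`) or with the element fixing `Q` supplied by
isolation, and on two orbits other than `O` it agrees with the identity. Since `A` is
2-orbit-closed, this permutation lies in `A`.
-/

open Equiv Equiv.Perm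

section Orbits

variable {X : Type*} (A : Subgroup (Perm X))

theorem apply_mem_orbitOf {a : Perm X} (ha : a ∈ A) {x z : X} (hz : z ∈ orbitOf A x) :
    a z ∈ orbitOf A x := by
  obtain ⟨c, hc, rfl⟩ := hz
  exact ⟨a * c, A.mul_mem ha hc, rfl⟩

theorem apply_mem_orbitOf_iff {a : Perm X} (ha : a ∈ A) {x z : X} :
    a z ∈ orbitOf A x ↔ z ∈ orbitOf A x :=
  ⟨fun h => by simpa using apply_mem_orbitOf A (A.inv_mem ha) h, apply_mem_orbitOf A ha⟩

theorem orbitOf_eq_of_mem {x z : X} (hz : z ∈ orbitOf A x) : orbitOf A z = orbitOf A x := by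
  obtain ⟨c, hc, rfl⟩ := hz
  ext w
  constructor
  · rintro ⟨b, hb, rfl⟩
    exact ⟨b * c, A.mul_mem hb hc, rfl⟩
  · rintro ⟨b, hb, rfl⟩
    exact ⟨b * c⁻¹, A.mul_mem hb (A.inv_mem hc), by simp⟩

theorem notMem_orbitOf_of_ne {x y z : X} (hne : orbitOf A y ≠ orbitOf A x)
    (hz : z ∈ orbitOf A y) : z ∉ orbitOf A x := fun hz' =>
  hne ((orbitOf_eq_of_mem A hz).symm.trans (orbitOf_eq_of_mem A hz'))

noncomputable def restrictToOrbit {c : Perm X} (hc : c ∈ A) (x : X) : Perm X := by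
  classical
  exact ofSubtype (c.subtypePerm fun _ => apply_mem_orbitOf_iff A hc (x := x))

variable {A}

theorem restrictToOrbit_apply_of_mem {c : Perm X} (hc : c ∈ A) {x z : X}
    (hz : z ∈ orbitOf A x) : restrictToOrbit A hc x z = c z := by
  classical
  unfold restrictToOrbit
  exact ofSubtype_subtypePerm_of_mem _ hz

theorem restrictToOrbit_apply_of_notMem {c : Perm X} (hc : c ∈ A) {x z : X}
    (hz : z ∉ orbitOf A x) : restrictToOrbit A hc x z = z := by
  classical
  unfold restrictToOrbit
  exact ofSubtype_subtypePerm_of_not_mem _ hz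

theorem restrictToOrbit_mem (hclosed : TwoOrbitClosed A) {c : Perm X} (hc : c ∈ A) {x : X}
    (hsep : ∀ y, orbitOf A y ≠ orbitOf A x →
      ∃ b ∈ A, (∀ z ∈ orbitOf A x, b z = c z) ∧ ∀ z ∈ orbitOf A y, b z = z) :
    restrictToOrbit A hc x ∈ A := by
  set σ := restrictToOrbit A hc x
  have agrees_with_orbit_union : ∀ y, ∃ b ∈ A, ∀ z ∈ orbitOf A x ∪ orbitOf A y, σ z = b z := by
    intro y
    by_cases hy : orbitOf A y = orbitOf A x
    · refine ⟨c, hc, fun z hz => restrictToOrbit_apply_of_mem hc ?_⟩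
      rwa [hy, Set.union_self] at hz
    · obtain ⟨b, hb, hbO, hbQ⟩ := hsep y hy
      refine ⟨b, hb, ?_⟩
      rintro z (hz | hz)
      · rw [restrictToOrbit_apply_of_mem hc hz, hbO z hz]
      · rw [restrictToOrbit_apply_of_notMem hc (notMem_orbitOf_of_ne A hy hz), hbQ z hz]
  refine hclosed σ fun y₁ y₂ => ?_
  by_cases h₁ : orbitOf A y₁ = orbitOf A x
  · simpa only [h₁, SetLike.mem_coe] using agrees_with_orbit_union y₂
  by_cases h₂ : orbitOf A y₂ = orbitOf A x
  · simpa only [h₂, Set.union_comm, SetLike.mem_coe] using agrees_with_orbit_union y₁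
  refine ⟨1, A.one_mem, ?_⟩
  rintro z (hz | hz)
  · exact restrictToOrbit_apply_of_notMem hc (notMem_orbitOf_of_ne A h₁ hz)
  · exact restrictToOrbit_apply_of_notMem hc (notMem_orbitOf_of_ne A h₂ hz)

theorem factorIsElem2_of_isolatedWrt (hclosed : TwoOrbitClosed A) {x : X}
    (hiso : IsolatedWrt (A : Set (Perm X)) (orbitOf A x)) : FactorIsElem2 A (orbitOf A x) :=
  fun a ha =>
    ⟨restrictToOrbit A (A.mul_mem ha ha) x,
      restrictToOrbit_mem hclosed _ fun y hy => hiso y hy a ha,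
      fun _ hz => restrictToOrbit_apply_of_mem _ hz,
      fun _ hz => restrictToOrbit_apply_of_notMem _ hz⟩

theorem isolatedWrt_of_factorIsElem2 {x : X} (hfac : FactorIsElem2 A (orbitOf A x)) :
    IsolatedWrt (A : Set (Perm X)) (orbitOf A x) := fun _ hy a ha =>
  let ⟨b, hb, hbO, hbout⟩ := hfac a ha
  ⟨b, hb, hbO, fun z hz => hbout z (notMem_orbitOf_of_ne A hy hz)⟩

end Orbits

theorem statement10_general (X : Type*) (A : Subgroup (Equiv.Perm X))
    (hclosed : TwoOrbitClosed A) (x : X) :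
    IsolatedWrt (A : Set (Equiv.Perm X)) (orbitOf (A : Set (Equiv.Perm X)) x) ↔
      FactorIsElem2 A (orbitOf (A : Set (Equiv.Perm X)) x) :=
  ⟨factorIsElem2_of_isolatedWrt hclosed, isolatedWrt_of_factorIsElem2⟩

/-- For an abelian 2-orbit-closed subgroup `A ≤ Sym(X)` and any orbit `O` of `A`:
`O` is isolated iff the factor group `A_O / A_O^*` is an elementary abelian
2-group. -/
theorem statement10 (X : Type*) [Fintype X] (A : Subgroup (Equiv.Perm X))
    (hab : ∀ a ∈ A, ∀ b ∈ A, a * b = b * a) (hclosed : TwoOrbitClosed A) (x : X) :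
    IsolatedWrt (A : Set (Equiv.Perm X)) (orbitOf (A : Set (Equiv.Perm X)) x) ↔
      FactorIsElem2 A (orbitOf (A : Set (Equiv.Perm X)) x) :=
  statement10_general X A hclosed x
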